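/- arXiv:2305.16274 — 4 statements merged into one kernel-verified Lean document; each statement's English description precedes it below -/
import Mathlib

section
/- Let K be a compact metric space equipped with its Borel σ-algebra, and let k : K × K → ℝ be a continuous symmetric positive semidefinite kernel. Then the kernel score φ_k is proper relative to the Borel probability measures on K: for all Borel probability measures P and Q on K, ∫ φ_k(Q, y) dQ(y) ≤ ∫ φ_k(P, y) dQ(y). -/
open MeasureTheory

section KernelScoreAux

open Set

set_option linter.unusedSectionVars false
set_option maxHeartbeats 1000000

variable {K : Type*} [MetricSpace K] [CompactSpace K] [MeasurableSpace K] [BorelSpace K]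

lemma my_cont_integrable (f : K → ℝ) (hf : Continuous f) (μ : Measure K) [IsFiniteMeasure μ] :
    Integrable f μ :=
  hf.integrable_of_hasCompactSupport (HasCompactSupport.of_compactSpace f)

lemma my_slice_cont {k : K → K → ℝ} (hk : Continuous fun p : K × K => k p.1 p.2) (x : K) :
    Continuous fun y => k x y := hk.comp (Continuous.prodMk_right x)

lemma my_slice_cont' {k : K → K → ℝ} (hk : Continuous fun p : K × K => k p.1 p.2) (y : K) :
    Continuous fun x => k x y := hk.comp (Continuous.prodMk_left y)

lemma my_kernel_bound {k : K → K → ℝ} (hk : Continuous fun p : K × K => k p.1 p.2) :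
    ∃ C : ℝ, ∀ x y : K, |k x y| ≤ C := by
  obtain ⟨C, hC⟩ := (isCompact_range (hk.abs)).bddAbove
  exact ⟨C, fun x y => hC ⟨(x, y), rfl⟩⟩

lemma my_cont_param {k : K → K → ℝ} (hk : Continuous fun p : K × K => k p.1 p.2)
    (ν : Measure K) [IsFiniteMeasure ν] : Continuous fun x => ∫ y, k x y ∂ν := by
  obtain ⟨C, hC⟩ := my_kernel_bound hk
  exact continuous_of_dominated
    (fun x => ((my_slice_cont hk x).aestronglyMeasurable))
    (fun x => Filter.Eventually.of_forall fun y => by simpa [Real.norm_eq_abs] using hC x y)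
    (integrable_const C)
    (Filter.Eventually.of_forall fun y => my_slice_cont' hk y)

lemma my_exists_partition (δ : ℝ) (hδ : 0 < δ) :
    ∃ (n : ℕ) (t : Fin n → K) (A : Fin n → Set K),
      (∀ i, MeasurableSet (A i)) ∧ (Pairwise (Function.onFun Disjoint A)) ∧
      ((⋃ i, A i) = univ) ∧ (∀ i, A i ⊆ Metric.ball (t i) δ) := by
  obtain ⟨s, hs⟩ := isCompact_univ.elim_finite_subcover (fun x : K => Metric.ball x δ)
    (fun x => Metric.isOpen_ball) (fun x _ => mem_iUnion.2 ⟨x, Metric.mem_ball_self hδ⟩)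
  set n := s.card with hn
  set t : Fin n → K := fun i => (s.equivFin.symm i : K) with ht
  set g : ℕ → Set K := fun m => if h : m < n then Metric.ball (t ⟨m, h⟩) δ else ∅ with hg
  have hgm : ∀ m, MeasurableSet (g m) := by
    intro m
    by_cases h : m < n <;> simp [hg, h, Metric.isOpen_ball.measurableSet]
  refine ⟨n, t, fun i => disjointed g i, fun i => MeasurableSet.disjointed hgm i, ?_, ?_, ?_⟩
  · intro i j hij
    exact disjoint_disjointed g (fun h => hij (Fin.val_injective h))
  · apply eq_univ_of_univ_subset
    intro x _
    have hx : x ∈ ⋃ m, g m := by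
      obtain ⟨y, hy, hxy⟩ := mem_iUnion₂.1 (hs (mem_univ x))
      refine mem_iUnion.2 ⟨(s.equivFin ⟨y, hy⟩ : Fin n).val, ?_⟩
      have h1 : ((s.equivFin ⟨y, hy⟩ : Fin n) : ℕ) < n := (s.equivFin ⟨y, hy⟩).isLt
      simp only [hg, h1, dif_pos]
      have : t ⟨(s.equivFin ⟨y, hy⟩ : Fin n), h1⟩ = y := by
        simp [ht, Fin.eta]
      rwa [this]
    rw [← iUnion_disjointed] at hx
    obtain ⟨m, hm⟩ := mem_iUnion.1 hx
    have hmn : m < n := by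
      by_contra h
      have : disjointed g m ⊆ g m := disjointed_le g m
      simp only [hg, dif_neg h] at this
      exact this hm
    exact mem_iUnion.2 ⟨⟨m, hmn⟩, hm⟩
  · intro i
    refine (disjointed_le g i).trans ?_
    simp [hg, i.isLt]

lemma my_sum_toReal_eq_one (μ : Measure K) [IsProbabilityMeasure μ]
    {n : ℕ} (A : Fin n → Set K) (hmeas : ∀ i, MeasurableSet (A i))
    (hdisj : Pairwise (Function.onFun Disjoint A)) (hunion : (⋃ i, A i) = univ) :
    ∑ i, (μ (A i)).toReal = 1 := by
  have h1 : ∑ i, μ (A i) = 1 := by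
    rw [← tsum_fintype (L := .unconditional _), ← measure_iUnion hdisj hmeas, hunion, measure_univ]
  rw [← ENNReal.toReal_sum (fun i _ => (measure_lt_top μ (A i)).ne), h1, ENNReal.toReal_one]

lemma my_approx {k : K → K → ℝ} (hk : Continuous fun p : K × K => k p.1 p.2)
    (μ ν : Measure K) [IsProbabilityMeasure μ] [IsProbabilityMeasure ν]
    {n : ℕ} (t : Fin n → K) (A : Fin n → Set K)
    (hmeas : ∀ i, MeasurableSet (A i)) (hdisj : Pairwise (Function.onFun Disjoint A))
    (hunion : (⋃ i, A i) = univ)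
    {ε : ℝ} (hε : 0 ≤ ε)
    (happ : ∀ i j, ∀ x ∈ A i, ∀ y ∈ A j, |k x y - k (t i) (t j)| ≤ ε) :
    |(∫ x, ∫ y, k x y ∂ν ∂μ) -
      ∑ i, ∑ j, (μ (A i)).toReal * (ν (A j)).toReal * k (t i) (t j)| ≤ ε := by
  have hG : ∀ j : Fin n, Continuous fun x => ∫ y in A j, k x y ∂ν :=
    fun j => my_cont_param hk (ν.restrict (A j))
  have hF : Continuous fun x => ∫ y, k x y ∂ν := my_cont_param hk ν
  have h1 : (∫ x, ∫ y, k x y ∂ν ∂μ) =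
      ∑ i, ∑ j, ∫ x in A i, ∫ y in A j, k x y ∂ν ∂μ := by
    have e1 : (∫ x, ∫ y, k x y ∂ν ∂μ) = ∑ i, ∫ x in A i, ∫ y, k x y ∂ν ∂μ := by
      rw [← setIntegral_univ, ← hunion]
      exact integral_iUnion_fintype hmeas hdisj
        (fun i => (my_cont_integrable _ hF μ).integrableOn)
    rw [e1]
    refine Finset.sum_congr rfl fun i _ => ?_
    have e2 : ∀ x : K, (∫ y, k x y ∂ν) = ∑ j, ∫ y in A j, k x y ∂ν := by
      intro x
      rw [← setIntegral_univ, ← hunion]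
      exact integral_iUnion_fintype hmeas hdisj
        (fun j => (my_cont_integrable _ (my_slice_cont hk x) ν).integrableOn)
    rw [show (∫ x in A i, ∫ y, k x y ∂ν ∂μ) = ∫ x in A i, ∑ j, ∫ y in A j, k x y ∂ν ∂μ from
      integral_congr_ae (Filter.Eventually.of_forall fun x => e2 x)]
    exact integral_finset_sum _ fun j _ => (my_cont_integrable _ (hG j) μ).integrableOn
  rw [h1, ← Finset.sum_sub_distrib]
  have key : ∀ i j : Fin n,
      |(∫ x in A i, ∫ y in A j, k x y ∂ν ∂μ) -
        (μ (A i)).toReal * (ν (A j)).toReal * k (t i) (t j)|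
      ≤ ε * (ν (A j)).toReal * (μ (A i)).toReal := by
    intro i j
    have inner : ∀ x ∈ A i,
        |(∫ y in A j, k x y ∂ν) - (ν (A j)).toReal * k (t i) (t j)| ≤ ε * (ν (A j)).toReal := by
      intro x hx
      have e : (∫ y in A j, k x y ∂ν) - (ν (A j)).toReal * k (t i) (t j)
          = ∫ y in A j, (k x y - k (t i) (t j)) ∂ν := by
        rw [integral_sub ((my_cont_integrable _ (my_slice_cont hk x) ν).integrableOn)
          (integrableOn_const (measure_lt_top ν (A j)).ne),
          setIntegral_const, measureReal_def, smul_eq_mul, mul_comm]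
      rw [e]
      have := norm_setIntegral_le_of_norm_le_const (measure_lt_top ν (A j))
        (f := fun y => k x y - k (t i) (t j)) (C := ε)
        (fun y hy => by simpa [Real.norm_eq_abs] using happ i j x hx y hy)
      simpa [Real.norm_eq_abs, measureReal_def] using this
    have e : (∫ x in A i, ∫ y in A j, k x y ∂ν ∂μ) -
        (μ (A i)).toReal * (ν (A j)).toReal * k (t i) (t j)
        = ∫ x in A i, ((∫ y in A j, k x y ∂ν) - (ν (A j)).toReal * k (t i) (t j)) ∂μ := by
      rw [integral_sub ((my_cont_integrable _ (hG j) μ).integrableOn)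
        (integrableOn_const (measure_lt_top μ (A i)).ne),
        setIntegral_const, measureReal_def, smul_eq_mul]
      ring
    rw [e]
    have := norm_setIntegral_le_of_norm_le_const (measure_lt_top μ (A i))
      (f := fun x => (∫ y in A j, k x y ∂ν) - (ν (A j)).toReal * k (t i) (t j))
      (C := ε * (ν (A j)).toReal)
      (fun x hx => by simpa [Real.norm_eq_abs] using inner x hx)
    simpa [Real.norm_eq_abs, mul_assoc, measureReal_def] using this
  calc |∑ i, (∑ j, (∫ x in A i, ∫ y in A j, k x y ∂ν ∂μ) -
          ∑ j, (μ (A i)).toReal * (ν (A j)).toReal * k (t i) (t j))|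
      ≤ ∑ i, |∑ j, (∫ x in A i, ∫ y in A j, k x y ∂ν ∂μ) -
          ∑ j, (μ (A i)).toReal * (ν (A j)).toReal * k (t i) (t j)| :=
        Finset.abs_sum_le_sum_abs _ _
    _ ≤ ∑ i : Fin n, ε * (μ (A i)).toReal := by
        refine Finset.sum_le_sum fun i _ => ?_
        rw [← Finset.sum_sub_distrib]
        calc |∑ j, ((∫ x in A i, ∫ y in A j, k x y ∂ν ∂μ) -
                (μ (A i)).toReal * (ν (A j)).toReal * k (t i) (t j))|
            ≤ ∑ j, |(∫ x in A i, ∫ y in A j, k x y ∂ν ∂μ) -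
                (μ (A i)).toReal * (ν (A j)).toReal * k (t i) (t j)| :=
              Finset.abs_sum_le_sum_abs _ _
          _ ≤ ∑ j, ε * (ν (A j)).toReal * (μ (A i)).toReal :=
              Finset.sum_le_sum fun j _ => key i j
          _ = ε * (μ (A i)).toReal := by
              rw [← Finset.sum_mul, ← Finset.mul_sum,
                my_sum_toReal_eq_one ν A hmeas hdisj hunion, mul_one]
    _ = ε := by
        rw [← Finset.mul_sum, my_sum_toReal_eq_one μ A hmeas hdisj hunion, mul_one]

end KernelScoreAux

/-- The kernel score `φ_k(P, y) = ∫∫ k(x,x') dP dP − 2 ∫ k(x,y) dP`. -/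
noncomputable def kernelScore {K : Type*} [MeasurableSpace K] (k : K → K → ℝ)
    (P : Measure K) (y : K) : ℝ :=
  (∫ x, (∫ x', k x x' ∂P) ∂P) - 2 * ∫ x, k x y ∂P

set_option maxHeartbeats 1000000 in
theorem kernelScore_proper
    {K : Type*} [MetricSpace K] [CompactSpace K] [MeasurableSpace K] [BorelSpace K]
    (k : K → K → ℝ) (hk_cont : Continuous fun p : K × K => k p.1 p.2)
    (hk_symm : ∀ x y, k x y = k y x)
    (hk_psd : ∀ (n : ℕ) (x : Fin n → K) (c : Fin n → ℝ),
      0 ≤ ∑ i, ∑ j, c i * c j * k (x i) (x j))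
    (P Q : Measure K) [IsProbabilityMeasure P] [IsProbabilityMeasure Q] :
    (∫ y, kernelScore k Q y ∂Q) ≤ ∫ y, kernelScore k P y ∂Q := by
  have hk' : Continuous fun p : K × K => k p.2 p.1 := hk_cont.comp continuous_swap
  have hgQ : Continuous fun y => ∫ x, k x y ∂Q := my_cont_param (k := fun a b => k b a) hk' Q
  have hgP : Continuous fun y => ∫ x, k x y ∂P := my_cont_param (k := fun a b => k b a) hk' P
  have hsymm_int : ∀ (μ : Measure K) (y : K), (∫ x, k x y ∂μ) = ∫ x, k y x ∂μ := by
    intro μ y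
    exact integral_congr_ae (Filter.Eventually.of_forall fun x => hk_symm x y)
  have hLHS : (∫ y, kernelScore k Q y ∂Q) = -(∫ x, ∫ y, k x y ∂Q ∂Q) := by
    simp only [kernelScore]
    rw [integral_sub (integrable_const _) ((my_cont_integrable _ hgQ Q).const_mul 2),
      integral_const, integral_const_mul]
    have h2 : (∫ y, ∫ x, k x y ∂Q ∂Q) = ∫ x, ∫ y, k x y ∂Q ∂Q := by
      simp_rw [hsymm_int Q]
    rw [h2]
    simp [measure_univ]
    ring
  have hRHS : (∫ y, kernelScore k P y ∂Q)
      = (∫ x, ∫ y, k x y ∂P ∂P) - 2 * (∫ x, ∫ y, k x y ∂P ∂Q) := by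
    simp only [kernelScore]
    rw [integral_sub (integrable_const _) ((my_cont_integrable _ hgP Q).const_mul 2),
      integral_const, integral_const_mul]
    have h2 : (∫ y, ∫ x, k x y ∂P ∂Q) = ∫ x, ∫ y, k x y ∂P ∂Q := by
      simp_rw [hsymm_int P]
    rw [h2]
    simp [measure_univ]
  rw [hLHS, hRHS]
  have main : 0 ≤ (∫ x, ∫ y, k x y ∂P ∂P) + (∫ x, ∫ y, k x y ∂Q ∂Q)
      - 2 * (∫ x, ∫ y, k x y ∂P ∂Q) := by
    apply le_of_forall_pos_le_add
    intro ε hε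
    have hε4 : (0:ℝ) < ε / 4 := by linarith
    obtain ⟨δ, hδ, hδ'⟩ := Metric.uniformContinuous_iff.1
      (CompactSpace.uniformContinuous_of_continuous hk_cont) (ε / 4) hε4
    obtain ⟨n, t, A, hmeas, hdisj, hunion, hball⟩ := my_exists_partition (K := K) δ hδ
    have happ : ∀ i j, ∀ x ∈ A i, ∀ y ∈ A j, |k x y - k (t i) (t j)| ≤ ε / 4 := by
      intro i j x hx y hy
      have hd : dist (⟨x, y⟩ : K × K) (⟨t i, t j⟩ : K × K) < δ := by
        rw [Prod.dist_eq]
        exact max_lt (Metric.mem_ball.1 (hball i hx)) (Metric.mem_ball.1 (hball j hy))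
      have := hδ' hd
      rw [Real.dist_eq] at this
      exact this.le
    have hPP := my_approx hk_cont P P t A hmeas hdisj hunion hε4.le happ
    have hQQ := my_approx hk_cont Q Q t A hmeas hdisj hunion hε4.le happ
    have hQP := my_approx hk_cont Q P t A hmeas hdisj hunion hε4.le happ
    set a : Fin n → ℝ := fun i => (P (A i)).toReal with ha
    set b : Fin n → ℝ := fun i => (Q (A i)).toReal with hb
    have hpsd := hk_psd n t (fun i => a i - b i)
    have hswap : (∑ i, ∑ j, a i * b j * k (t i) (t j))
        = ∑ i, ∑ j, b i * a j * k (t i) (t j) := by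
      rw [Finset.sum_comm]
      exact Finset.sum_congr rfl fun i _ => Finset.sum_congr rfl fun j _ => by
        rw [hk_symm]; ring
    have hexp : (∑ i, ∑ j, (a i - b i) * (a j - b j) * k (t i) (t j))
        = (∑ i, ∑ j, a i * a j * k (t i) (t j)) - (∑ i, ∑ j, a i * b j * k (t i) (t j))
          - (∑ i, ∑ j, b i * a j * k (t i) (t j)) + ∑ i, ∑ j, b i * b j * k (t i) (t j) := by
      simp only [← Finset.sum_add_distrib, ← Finset.sum_sub_distrib]
      exact Finset.sum_congr rfl fun i _ => Finset.sum_congr rfl fun j _ => by ring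
    have h1 := abs_le.1 hPP
    have h2 := abs_le.1 hQQ
    have h3 := abs_le.1 hQP
    have hS : 0 ≤ (∑ i, ∑ j, a i * a j * k (t i) (t j))
        + (∑ i, ∑ j, b i * b j * k (t i) (t j))
        - 2 * ∑ i, ∑ j, b i * a j * k (t i) (t j) := by
      rw [hexp, hswap] at hpsd
      linarith
    obtain ⟨h1l, h1r⟩ := h1
    obtain ⟨h2l, h2r⟩ := h2
    obtain ⟨h3l, h3r⟩ := h3
    linarith
  linarith
end

section
/- Let K be a compact metric space equipped with its Borel σ-algebra, and let k : K × K → ℝ be a continuous symmetric positive semidefinite kernel that is characteristic. Then the kernel score φ_k is strictly proper relative to the Borel probability measures on K: for all Borel probability measures P and Q on K, ∫ φ_k(Q, y) dQ(y) ≤ ∫ φ_k(P, y) dQ(y), and equality holds if and only if P = Q. -/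
open MeasureTheory

/-- The squared maximum mean discrepancy
`D_k(P,Q)² = ∫∫ k dP⊗P − 2 ∫∫ k dP⊗Q + ∫∫ k dQ⊗Q`. -/
noncomputable def mmdSq {K : Type*} [MeasurableSpace K] (k : K → K → ℝ)
    (P Q : Measure K) : ℝ :=
  (∫ x, (∫ x', k x x' ∂P) ∂P) - 2 * (∫ x, (∫ y, k x y ∂Q) ∂P)
    + (∫ x, (∫ x', k x x' ∂Q) ∂Q)


open Metric


section aux
variable {K : Type*} [MetricSpace K] [CompactSpace K] [MeasurableSpace K] [BorelSpace K]

lemma cont_integrable_prod (g : K × K → ℝ) (hg : Continuous g)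
    (μ ν : Measure K) [IsFiniteMeasure μ] [IsFiniteMeasure ν] :
    Integrable g (μ.prod ν) :=
  hg.integrable_of_hasCompactSupport (isClosed_tsupport g).isCompact

/-- A finite measurable partition subordinate to balls of radius δ. -/
lemma exists_partition [Nonempty K] {δ : ℝ} (hδ : 0 < δ) :
    ∃ (n : ℕ) (A : Fin n → Set K) (t : Fin n → K),
      (∀ i, MeasurableSet (A i)) ∧ (⋃ i, A i = Set.univ) ∧
      Pairwise (Function.onFun Disjoint A) ∧ ∀ i, A i ⊆ ball (t i) δ := by
  classical
  obtain ⟨s, hs⟩ := isCompact_univ.elim_finite_subcover (fun x : K => ball x δ)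
    (fun x => isOpen_ball) (fun x _ => Set.mem_iUnion.mpr ⟨x, mem_ball_self hδ⟩)
  set t : Fin s.card → K := fun i => (s.equivFin.symm i : K) with ht
  set A : Fin s.card → Set K := fun i =>
    ball (t i) δ \ ⋃ (j : Fin s.card) (_ : j < i), ball (t j) δ with hA
  refine ⟨s.card, A, t, fun i => measurableSet_ball.diff (MeasurableSet.iUnion fun j =>
      MeasurableSet.iUnion fun _ => measurableSet_ball), ?_, ?_, fun i => Set.diff_subset⟩
  · ext x
    simp only [Set.mem_univ, iff_true, Set.mem_iUnion]
    have hx : x ∈ ⋃ i ∈ s, ball i δ := hs (Set.mem_univ x)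
    obtain ⟨y, hy, hxy⟩ := Set.mem_iUnion₂.mp hx
    have hne : (Finset.univ.filter (fun i => x ∈ ball (t i) δ)).Nonempty := by
      refine ⟨s.equivFin ⟨y, hy⟩, Finset.mem_filter.mpr ⟨Finset.mem_univ _, ?_⟩⟩
      have : t (s.equivFin ⟨y, hy⟩) = y := by simp [ht]
      rw [this]; exact hxy
    refine ⟨(Finset.univ.filter (fun i => x ∈ ball (t i) δ)).min' hne, ?_, ?_⟩
    · exact (Finset.mem_filter.mp (Finset.min'_mem _ hne)).2
    · intro hmem
      obtain ⟨j, hj⟩ := Set.mem_iUnion.mp hmem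
      obtain ⟨hji, hxj⟩ := Set.mem_iUnion.mp hj
      have hle : (Finset.univ.filter (fun i => x ∈ ball (t i) δ)).min' hne ≤ j :=
        Finset.min'_le _ j (Finset.mem_filter.mpr ⟨Finset.mem_univ _, hxj⟩)
      exact absurd hji (not_lt.mpr hle)
  · intro i j hij
    rcases hij.lt_or_gt with h | h
    · refine Set.disjoint_left.mpr fun x hxi hxj => ?_
      exact hxj.2 (Set.mem_iUnion.mpr ⟨i, Set.mem_iUnion.mpr ⟨h, hxi.1⟩⟩)
    · refine Set.disjoint_left.mpr fun x hxi hxj => ?_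
      exact hxi.2 (Set.mem_iUnion.mpr ⟨j, Set.mem_iUnion.mpr ⟨h, hxj.1⟩⟩)

lemma approx_double_integral (k : K → K → ℝ)
    (hk_cont : Continuous fun p : K × K => k p.1 p.2)
    {n : ℕ} (A : Fin n → Set K) (t : Fin n → K)
    (hmeas : ∀ i, MeasurableSet (A i))
    (hcover : ⋃ i, A i = Set.univ)
    (hdisj : Pairwise (Function.onFun Disjoint A))
    {ε : ℝ} (hε : 0 ≤ ε)
    (hnear : ∀ i j : Fin n, ∀ p : K × K, p ∈ A i ×ˢ A j → |k p.1 p.2 - k (t i) (t j)| ≤ ε)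
    (μ ν : Measure K) [IsProbabilityMeasure μ] [IsProbabilityMeasure ν] :
    |(∫ x, ∫ y, k x y ∂ν ∂μ)
      - ∑ i, ∑ j, (μ (A i)).toReal * (ν (A j)).toReal * k (t i) (t j)| ≤ ε := by
  have hint : Integrable (fun p : K × K => k p.1 p.2) (μ.prod ν) :=
    cont_integrable_prod _ hk_cont μ ν
  have h1 : (∫ x, ∫ y, k x y ∂ν ∂μ) = ∫ p, k p.1 p.2 ∂(μ.prod ν) :=
    integral_integral hint
  set B : Fin n × Fin n → Set (K × K) := fun p => A p.1 ×ˢ A p.2 with hB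
  have hBmeas : ∀ p, MeasurableSet (B p) := fun p => (hmeas p.1).prod (hmeas p.2)
  have hBdisj : Pairwise (Function.onFun Disjoint B) := by
    intro p q hpq
    have : p.1 ≠ q.1 ∨ p.2 ≠ q.2 := by
      by_contra h
      push_neg at h
      exact hpq (Prod.ext h.1 h.2)
    rcases this with h | h
    · exact Set.disjoint_left.mpr fun x hx hx' =>
        Set.disjoint_left.mp (hdisj h) hx.1 hx'.1
    · exact Set.disjoint_left.mpr fun x hx hx' =>
        Set.disjoint_left.mp (hdisj h) hx.2 hx'.2
  have hBcover : ⋃ p, B p = Set.univ := by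
    ext ⟨x, y⟩
    simp only [Set.mem_univ, iff_true, Set.mem_iUnion]
    have hx : x ∈ ⋃ i, A i := hcover ▸ Set.mem_univ x
    have hy : y ∈ ⋃ i, A i := hcover ▸ Set.mem_univ y
    obtain ⟨i, hi⟩ := Set.mem_iUnion.mp hx
    obtain ⟨j, hj⟩ := Set.mem_iUnion.mp hy
    exact ⟨(i, j), hi, hj⟩
  have h2 : (∫ p, k p.1 p.2 ∂(μ.prod ν)) =
      ∑ p : Fin n × Fin n, ∫ q in B p, k q.1 q.2 ∂(μ.prod ν) := by
    rw [← setIntegral_univ, ← hBcover,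
      integral_iUnion hBmeas hBdisj (hBcover ▸ hint.integrableOn), tsum_fintype]
  have hmeasB : ∀ p : Fin n × Fin n,
      ((μ.prod ν) (B p)).toReal = (μ (A p.1)).toReal * (ν (A p.2)).toReal := by
    intro p
    rw [hB, Measure.prod_prod, ENNReal.toReal_mul]
  have hterm : ∀ p : Fin n × Fin n,
      |(∫ q in B p, k q.1 q.2 ∂(μ.prod ν))
        - (μ (A p.1)).toReal * (ν (A p.2)).toReal * k (t p.1) (t p.2)|
        ≤ ε * ((μ (A p.1)).toReal * (ν (A p.2)).toReal) := by
    intro p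
    have hconst : (μ (A p.1)).toReal * (ν (A p.2)).toReal * k (t p.1) (t p.2)
        = ∫ _ in B p, k (t p.1) (t p.2) ∂(μ.prod ν) := by
      rw [setIntegral_const, measureReal_def, hmeasB p, smul_eq_mul]
    rw [hconst, ← integral_sub (hint.integrableOn) ((integrableOn_const_iff).mpr
      (Or.inr (measure_lt_top _ _)))]
    have := norm_setIntegral_le_of_norm_le_const (μ := μ.prod ν)
      (s := B p) (f := fun q => k q.1 q.2 - k (t p.1) (t p.2)) (C := ε)
      (measure_lt_top _ _) (fun q hq => by
        simpa [Real.norm_eq_abs] using hnear p.1 p.2 q hq)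
    · calc |∫ q in B p, (k q.1 q.2 - k (t p.1) (t p.2)) ∂(μ.prod ν)|
          ≤ ε * ((μ.prod ν) (B p)).toReal := by simpa [Real.norm_eq_abs, measureReal_def] using this
        _ = ε * ((μ (A p.1)).toReal * (ν (A p.2)).toReal) := by rw [hmeasB p]
  have hsum_meas : ∑ p : Fin n × Fin n, (μ (A p.1)).toReal * (ν (A p.2)).toReal = 1 := by
    rw [Fintype.sum_prod_type]
    have hstep : ∀ x : Fin n, ∑ y : Fin n, (μ (A (x, y).1)).toReal * (ν (A (x, y).2)).toReal
        = (μ (A x)).toReal * ∑ y, (ν (A y)).toReal := fun x => by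
      rw [Finset.mul_sum]
    rw [Finset.sum_congr rfl (fun x _ => hstep x)]
    have hμ : ∑ i, (μ (A i)).toReal = 1 := by
      have := measure_iUnion hdisj hmeas (μ := μ)
      rw [hcover] at this
      have h1 : (μ Set.univ) = 1 := measure_univ
      rw [h1, tsum_fintype] at this
      have := congrArg ENNReal.toReal this.symm
      rwa [ENNReal.toReal_sum (fun a _ => measure_ne_top μ _), ENNReal.toReal_one] at this
    have hν : ∑ i, (ν (A i)).toReal = 1 := by
      have := measure_iUnion hdisj hmeas (μ := ν)
      rw [hcover] at this
      have h1 : (ν Set.univ) = 1 := measure_univ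
      rw [h1, tsum_fintype] at this
      have := congrArg ENNReal.toReal this.symm
      rwa [ENNReal.toReal_sum (fun a _ => measure_ne_top ν _), ENNReal.toReal_one] at this
    rw [hν]
    simpa only [mul_one] using hμ
  have hS : ∑ i, ∑ j, (μ (A i)).toReal * (ν (A j)).toReal * k (t i) (t j)
      = ∑ p : Fin n × Fin n, (μ (A p.1)).toReal * (ν (A p.2)).toReal * k (t p.1) (t p.2) := by
    rw [Fintype.sum_prod_type]
  rw [h1, h2, hS, ← Finset.sum_sub_distrib]
  calc |∑ p : Fin n × Fin n, ((∫ q in B p, k q.1 q.2 ∂(μ.prod ν))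
        - (μ (A p.1)).toReal * (ν (A p.2)).toReal * k (t p.1) (t p.2))|
      ≤ ∑ p : Fin n × Fin n, |(∫ q in B p, k q.1 q.2 ∂(μ.prod ν))
        - (μ (A p.1)).toReal * (ν (A p.2)).toReal * k (t p.1) (t p.2)| :=
        Finset.abs_sum_le_sum_abs _ _
    _ ≤ ∑ p : Fin n × Fin n, ε * ((μ (A p.1)).toReal * (ν (A p.2)).toReal) :=
        Finset.sum_le_sum fun p _ => hterm p
    _ = ε := by rw [← Finset.mul_sum, hsum_meas, mul_one]

end aux

section aux2
variable {K : Type*} [MetricSpace K] [CompactSpace K] [MeasurableSpace K] [BorelSpace K]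

lemma mmdSq_nonneg (k : K → K → ℝ) (hk_cont : Continuous fun p : K × K => k p.1 p.2)
    (hk_symm : ∀ x y, k x y = k y x)
    (hk_psd : ∀ (n : ℕ) (x : Fin n → K) (c : Fin n → ℝ),
      0 ≤ ∑ i, ∑ j, c i * c j * k (x i) (x j))
    (P Q : Measure K) [IsProbabilityMeasure P] [IsProbabilityMeasure Q] :
    0 ≤ mmdSq k P Q := by
  have hne : Nonempty K := by
    by_contra h
    rw [not_nonempty_iff] at h
    have h1 : (P Set.univ) = 1 := measure_univ
    rw [Set.univ_eq_empty_iff.mpr h, measure_empty] at h1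
    exact zero_ne_one h1
  by_contra hneg
  push_neg at hneg
  set m := mmdSq k P Q with hm
  set ε : ℝ := -m / 8 with hε
  have hεpos : 0 < ε := by rw [hε]; linarith
  obtain ⟨δ, hδ, hδε⟩ := Metric.uniformContinuous_iff.mp
    (CompactSpace.uniformContinuous_of_continuous hk_cont) ε hεpos
  obtain ⟨n, A, t, hmeas, hcover, hdisj, hsub⟩ := exists_partition (K := K) hδ
  have hnear : ∀ i j : Fin n, ∀ p : K × K, p ∈ A i ×ˢ A j →
      |k p.1 p.2 - k (t i) (t j)| ≤ ε := by
    intro i j p hp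
    have h1 : dist p.1 (t i) < δ := hsub i hp.1
    have h2 : dist p.2 (t j) < δ := hsub j hp.2
    have hd : dist p (t i, t j) < δ := by
      rw [Prod.dist_eq]; exact max_lt h1 h2
    have := hδε hd
    rw [Real.dist_eq] at this
    exact this.le
  have hPP := approx_double_integral k hk_cont A t hmeas hcover hdisj hεpos.le hnear P P
  have hPQ := approx_double_integral k hk_cont A t hmeas hcover hdisj hεpos.le hnear P Q
  have hQQ := approx_double_integral k hk_cont A t hmeas hcover hdisj hεpos.le hnear Q Q
  set c : Fin n → ℝ := fun i => (P (A i)).toReal - (Q (A i)).toReal with hc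
  have h0 := hk_psd n t c
  have hQP : (∑ i, ∑ j, (Q (A i)).toReal * (P (A j)).toReal * k (t i) (t j))
      = ∑ i, ∑ j, (P (A i)).toReal * (Q (A j)).toReal * k (t i) (t j) := by
    rw [Finset.sum_comm]
    refine Finset.sum_congr rfl fun i _ => Finset.sum_congr rfl fun j _ => ?_
    rw [hk_symm (t j) (t i)]; ring
  have hexp : ∑ i, ∑ j, c i * c j * k (t i) (t j)
      = (∑ i, ∑ j, (P (A i)).toReal * (P (A j)).toReal * k (t i) (t j))
        - (∑ i, ∑ j, (P (A i)).toReal * (Q (A j)).toReal * k (t i) (t j))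
        - ((∑ i, ∑ j, (Q (A i)).toReal * (P (A j)).toReal * k (t i) (t j))
          - ∑ i, ∑ j, (Q (A i)).toReal * (Q (A j)).toReal * k (t i) (t j)) := by
    have hterm : ∀ i j : Fin n, c i * c j * k (t i) (t j)
        = (P (A i)).toReal * (P (A j)).toReal * k (t i) (t j)
          - (P (A i)).toReal * (Q (A j)).toReal * k (t i) (t j)
          - ((Q (A i)).toReal * (P (A j)).toReal * k (t i) (t j)
            - (Q (A i)).toReal * (Q (A j)).toReal * k (t i) (t j)) := fun i j => by
      rw [hc]; ring
    rw [Finset.sum_congr rfl fun i _ => Finset.sum_congr rfl fun j _ => hterm i j]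
    simp only [Finset.sum_sub_distrib]
  rw [hQP] at hexp
  rw [hexp] at h0
  have e1 := abs_le.mp hPP
  have e2 := abs_le.mp hPQ
  have e3 := abs_le.mp hQQ
  have hm' : m = (∫ x, (∫ x', k x x' ∂P) ∂P) - 2 * (∫ x, (∫ y, k x y ∂Q) ∂P)
      + (∫ x, (∫ x', k x x' ∂Q) ∂Q) := by rw [hm, mmdSq]
  have hεm : ε = -m / 8 := hε
  linarith [e1.1, e1.2, e2.1, e2.2, e3.1, e3.2]

end aux2

theorem kernelScore_strictly_proper
    {K : Type*} [MetricSpace K] [CompactSpace K] [MeasurableSpace K] [BorelSpace K]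
    (k : K → K → ℝ) (hk_cont : Continuous fun p : K × K => k p.1 p.2)
    (hk_symm : ∀ x y, k x y = k y x)
    (hk_psd : ∀ (n : ℕ) (x : Fin n → K) (c : Fin n → ℝ),
      0 ≤ ∑ i, ∑ j, c i * c j * k (x i) (x j))
    (hk_char : ∀ (P Q : Measure K), IsProbabilityMeasure P → IsProbabilityMeasure Q →
      mmdSq k P Q = 0 → P = Q)
    (P Q : Measure K) [IsProbabilityMeasure P] [IsProbabilityMeasure Q] :
    (∫ y, kernelScore k Q y ∂Q) ≤ (∫ y, kernelScore k P y ∂Q) ∧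
      ((∫ y, kernelScore k Q y ∂Q) = (∫ y, kernelScore k P y ∂Q) ↔ P = Q) := by
  have hscore : ∀ (μ : Measure K), ∀ _ : IsProbabilityMeasure μ,
      (∫ y, kernelScore k μ y ∂Q)
        = (∫ x, (∫ x', k x x' ∂μ) ∂μ) - 2 * ∫ x, (∫ y, k x y ∂Q) ∂μ := by
    intro μ hμ
    have hintμQ : Integrable (fun p : K × K => k p.1 p.2) (μ.prod Q) :=
      cont_integrable_prod _ hk_cont μ Q
    have hb : Integrable (fun y => ∫ x, k x y ∂μ) Q := hintμQ.integral_prod_right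
    have hswap : (∫ x, ∫ y, k x y ∂Q ∂μ) = ∫ y, ∫ x, k x y ∂μ ∂Q :=
      integral_integral_swap hintμQ
    calc (∫ y, kernelScore k μ y ∂Q)
        = ∫ y, ((∫ x, (∫ x', k x x' ∂μ) ∂μ) - 2 * ∫ x, k x y ∂μ) ∂Q := rfl
      _ = (∫ _, (∫ x, (∫ x', k x x' ∂μ) ∂μ) ∂Q) - ∫ y, 2 * ∫ x, k x y ∂μ ∂Q :=
          integral_sub (integrable_const _) (hb.const_mul 2)
      _ = (∫ x, (∫ x', k x x' ∂μ) ∂μ) - 2 * ∫ y, ∫ x, k x y ∂μ ∂Q := by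
          rw [integral_const, measureReal_def, measure_univ, ENNReal.toReal_one, one_smul,
            MeasureTheory.integral_const_mul]
      _ = (∫ x, (∫ x', k x x' ∂μ) ∂μ) - 2 * ∫ x, (∫ y, k x y ∂Q) ∂μ := by rw [← hswap]
  have hEP := hscore P inferInstance
  have hEQ := hscore Q inferInstance
  have key : (∫ y, kernelScore k P y ∂Q) - (∫ y, kernelScore k Q y ∂Q) = mmdSq k P Q := by
    rw [hEP, hEQ, mmdSq]; ring
  have hnn : 0 ≤ mmdSq k P Q := mmdSq_nonneg k hk_cont hk_symm hk_psd P Q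
  constructor
  · linarith
  · constructor
    · intro h
      exact hk_char P Q inferInstance inferInstance (by linarith)
    · intro h
      rw [h]
end

section
/- Let (X, 𝒜) be a measurable space, P a probability measure on X, and k : X × X → ℝ a bounded measurable symmetric kernel. Let (X_n)_{n ≥ 1} be a sequence of independent random variables defined on a probability space (Ω, ℱ, ℙ), each with law P. Then, almost surely, the pair U-statistics converge: (1/(m(m−1))) ∑_{1 ≤ i ≠ j ≤ m} k(X_i, X_j) → ∫∫ k(x, x') dP(x) dP(x') as m → ∞. -/
open MeasureTheory Filter

-- algebraic core of the interpolation bound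
lemma ustat_alg {C N M sn sm : ℝ} (hN : 0 < N) (hNM : N ≤ M)
    (h1 : |sm - sn| ≤ C * (M - N)) (h2 : |sn| ≤ C * N) (hC : 0 ≤ C) :
    |M⁻¹ * sm - N⁻¹ * sn| ≤ 2 * C * (M - N) / M := by
  have hM : 0 < M := lt_of_lt_of_le hN hNM
  have key : M⁻¹ * sm - N⁻¹ * sn = M⁻¹ * (sm - sn) + (M⁻¹ - N⁻¹) * sn := by
    field_simp; ring
  rw [key]
  have h3 : |M⁻¹ * (sm - sn)| ≤ M⁻¹ * (C * (M - N)) := by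
    rw [abs_mul, abs_of_pos (inv_pos.mpr hM)]
    exact mul_le_mul_of_nonneg_left h1 (le_of_lt (inv_pos.mpr hM))
  have h4 : |(M⁻¹ - N⁻¹) * sn| ≤ (N⁻¹ - M⁻¹) * (C * N) := by
    rw [abs_mul]
    have : |M⁻¹ - N⁻¹| = N⁻¹ - M⁻¹ := by
      rw [abs_sub_comm, abs_of_nonneg]
      have := inv_anti₀ hN hNM
      linarith
    rw [this]
    apply mul_le_mul_of_nonneg_left h2
    have := inv_anti₀ hN hNM
    linarith
  calc |M⁻¹ * (sm - sn) + (M⁻¹ - N⁻¹) * sn| ≤ _ + _ := abs_add_le _ _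
    _ ≤ M⁻¹ * (C * (M - N)) + (N⁻¹ - M⁻¹) * (C * N) := add_le_add h3 h4
    _ = 2 * C * (M - N) / M := by field_simp; ring

-- interpolation: convergence along squares implies convergence
lemma ustat_interp {C θ : ℝ} (hC : 0 ≤ C) (s : ℕ → ℝ) (hs0 : s 0 = 0)
    (hs : ∀ n m : ℕ, n ≤ m →
      |s m - s n| ≤ C * (((m:ℝ) * ((m:ℝ)-1)) - ((n:ℝ) * ((n:ℝ)-1))))
    (hconv : Tendsto (fun j : ℕ => (((j^2 : ℕ):ℝ) * (((j^2 : ℕ):ℝ) - 1))⁻¹ * s (j^2))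
      atTop (nhds θ)) :
    Tendsto (fun m : ℕ => ((m:ℝ) * ((m:ℝ) - 1))⁻¹ * s m) atTop (nhds θ) := by
  set u : ℕ → ℝ := fun m => ((m:ℝ) * ((m:ℝ) - 1))⁻¹ * s m with hu
  have hsqrt : Tendsto Nat.sqrt atTop atTop := by
    apply tendsto_atTop_atTop.mpr
    intro b
    exact ⟨b*b, fun m hm => Nat.le_sqrt.mpr hm⟩
  -- key bound for m with sqrt m ≥ 2
  have key : ∀ m : ℕ, 4 ≤ m → |u m - u ((Nat.sqrt m)^2)| ≤ 36 * C / (Nat.sqrt m : ℝ) := by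
    intro m hm
    set j := Nat.sqrt m with hj
    have hj2 : 2 ≤ j := Nat.le_sqrt.mpr (by omega)
    have hnm : j^2 ≤ m := by
      have := Nat.sqrt_le' m
      simpa [pow_two] using this
    have hmlt : m < (j+1)^2 := by
      have := Nat.lt_succ_sqrt' m
      simpa [pow_two] using this
    set N : ℝ := ((j^2 : ℕ):ℝ) * (((j^2 : ℕ):ℝ) - 1) with hN
    set M : ℝ := (m:ℝ) * ((m:ℝ) - 1) with hM
    have hjr : (2:ℝ) ≤ (j:ℝ) := by exact_mod_cast hj2
    have hNval : N = (j:ℝ)^2 * ((j:ℝ)^2 - 1) := by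
      rw [hN]; push_cast; ring
    have hmr : ((j:ℝ))^2 ≤ (m:ℝ) := by
      rw [← Nat.cast_pow]; exact_mod_cast hnm
    have hmr2 : (m:ℝ) ≤ (j:ℝ)^2 + 2*(j:ℝ) := by
      have hexp : (j+1)^2 = j^2 + 2*j + 1 := by ring
      have : m ≤ j^2 + 2*j := by omega
      calc (m:ℝ) ≤ ((j^2 + 2*j : ℕ):ℝ) := by exact_mod_cast this
        _ = (j:ℝ)^2 + 2*(j:ℝ) := by push_cast; ring
    have hj4 : (4:ℝ) ≤ (j:ℝ)^2 := by nlinarith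
    have hNpos : 0 < N := by rw [hNval]; nlinarith [hj4]
    have hNM : N ≤ M := by rw [hNval, hM]; nlinarith [hj4, hmr]
    have hMpos : 0 < M := lt_of_lt_of_le hNpos hNM
    have h1 : |s m - s (j^2)| ≤ C * (M - N) := hs _ _ hnm
    have h2 : |s (j^2)| ≤ C * N := by
      have := hs 0 (j^2) (Nat.zero_le _)
      simpa [hs0, hN] using this
    have hmain := ustat_alg hNpos hNM h1 h2 hC
    have : 2 * C * (M - N) / M ≤ 36 * C / (j:ℝ) := by
      rw [div_le_div_iff₀ hMpos (by linarith)]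
      have hd1 : M - N ≤ 9 * (j:ℝ)^3 := by rw [hNval, hM]; nlinarith [hjr, hmr2]
      have hd2 : (j:ℝ)^4 / 2 ≤ M := by
        have : (j:ℝ)^4/2 ≤ N := by rw [hNval]; nlinarith [hj4]
        linarith
      have hjpos : (0:ℝ) < (j:ℝ) := by linarith
      nlinarith [mul_le_mul_of_nonneg_left (mul_le_mul_of_nonneg_right hd1 hjpos.le)
          (by linarith : (0:ℝ) ≤ 2*C),
        mul_le_mul_of_nonneg_left hd2 (by linarith : (0:ℝ) ≤ 36*C)]
    exact le_trans hmain this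
  have h1 : Tendsto (fun m => u ((Nat.sqrt m)^2)) atTop (nhds θ) := hconv.comp hsqrt
  have h2 : Tendsto (fun m => u m - u ((Nat.sqrt m)^2)) atTop (nhds 0) := by
    apply squeeze_zero_norm' _ (tendsto_const_div_atTop_nhds_zero_nat (36*C) |>.comp hsqrt)
    filter_upwards [eventually_ge_atTop 4] with m hm
    simpa [Real.norm_eq_abs] using key m hm
  have := h2.add h1
  rw [zero_add] at this
  exact this.congr (fun m => by ring)

theorem pair_U_statistic_strongly_consistent
    {X : Type*} [MeasurableSpace X] (P : Measure X) [IsProbabilityMeasure P]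
    (k : X → X → ℝ) (hk_meas : Measurable fun p : X × X => k p.1 p.2)
    (hk_bdd : ∃ C : ℝ, ∀ x y, |k x y| ≤ C)
    (hk_symm : ∀ x y, k x y = k y x)
    {Ω : Type*} [MeasurableSpace Ω] (μ : Measure Ω) [IsProbabilityMeasure μ]
    (Xi : ℕ → Ω → X)
    (hXi_meas : ∀ n, Measurable (Xi n))
    (h_indep : ProbabilityTheory.iIndepFun Xi μ)
    (h_law : ∀ n, μ.map (Xi n) = P) :
    ∀ᵐ ω ∂μ, Tendsto
      (fun m : ℕ => ((m : ℝ) * ((m : ℝ) - 1))⁻¹ *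
        ∑ p ∈ (Finset.range m).offDiag, k (Xi p.1 ω) (Xi p.2 ω))
      atTop (nhds (∫ x, (∫ x', k x x' ∂P) ∂P)) := by
  classical
  obtain ⟨C0, hC0⟩ := hk_bdd
  set C : ℝ := |C0| with hCdef
  have hkC : ∀ x y, |k x y| ≤ C := fun x y => (hC0 x y).trans (le_abs_self _)
  have hCnn : 0 ≤ C := abs_nonneg _
  set θ : ℝ := ∫ x, (∫ x', k x x' ∂P) ∂P with hθ
  set B : ℝ := C + |θ| with hBdef
  have hBnn : 0 ≤ B := by positivity
  set S : ℕ → Ω → ℝ :=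
    fun n ω => ∑ p ∈ (Finset.range n).offDiag, k (Xi p.1 ω) (Xi p.2 ω) with hSdef
  set F : ℕ × ℕ → Ω → ℝ := fun p ω => k (Xi p.1 ω) (Xi p.2 ω) - θ with hFdef
  -- basic measurability
  have hpair : ∀ i j : ℕ, Measurable (fun ω => (Xi i ω, Xi j ω)) :=
    fun i j => (hXi_meas i).prodMk (hXi_meas j)
  have hF_meas : ∀ p : ℕ × ℕ, Measurable (F p) :=
    fun p => (hk_meas.comp (hpair p.1 p.2)).sub measurable_const
  have hF_bdd : ∀ (p : ℕ × ℕ) ω, |F p ω| ≤ B := by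
    intro p ω
    calc |F p ω| ≤ |k (Xi p.1 ω) (Xi p.2 ω)| + |θ| := abs_sub _ _
      _ ≤ B := by have := hkC (Xi p.1 ω) (Xi p.2 ω); rw [hBdef]; linarith
  have hF_int : ∀ p : ℕ × ℕ, Integrable (F p) μ := fun p =>
    ⟨(hF_meas p).aestronglyMeasurable,
      HasFiniteIntegral.of_bounded (C := B)
        (ae_of_all _ fun ω => by simpa [Real.norm_eq_abs] using hF_bdd p ω)⟩
  have hFF_int : ∀ p q : ℕ × ℕ, Integrable (fun ω => F p ω * F q ω) μ := fun p q =>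
    ⟨((hF_meas p).mul (hF_meas q)).aestronglyMeasurable,
      HasFiniteIntegral.of_bounded (C := B * B)
        (ae_of_all _ fun ω => by
          rw [Real.norm_eq_abs, abs_mul]
          exact mul_le_mul (hF_bdd p ω) (hF_bdd q ω) (abs_nonneg _) hBnn)⟩
  -- mean of one term
  have hmean : ∀ i j : ℕ, i ≠ j → ∫ ω, k (Xi i ω) (Xi j ω) ∂μ = θ := by
    intro i j hij
    have hmap : μ.map (fun ω => (Xi i ω, Xi j ω)) = P.prod P := by
      have h := (ProbabilityTheory.indepFun_iff_map_prod_eq_prod_map_map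
        (hXi_meas i).aemeasurable (hXi_meas j).aemeasurable).mp (h_indep.indepFun hij)
      rw [h, h_law, h_law]
    have hint : Integrable (fun z : X × X => k z.1 z.2) (P.prod P) :=
      ⟨hk_meas.aestronglyMeasurable,
        HasFiniteIntegral.of_bounded (C := C)
          (ae_of_all _ fun z => by simpa [Real.norm_eq_abs] using hkC z.1 z.2)⟩
    calc ∫ ω, k (Xi i ω) (Xi j ω) ∂μ
        = ∫ z : X × X, k z.1 z.2 ∂(μ.map (fun ω => (Xi i ω, Xi j ω))) := by
          rw [integral_map (hpair i j).aemeasurable hk_meas.aestronglyMeasurable]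
      _ = ∫ z : X × X, k z.1 z.2 ∂(P.prod P) := by rw [hmap]
      _ = θ := MeasureTheory.integral_prod _ hint
  have hF_mean : ∀ p : ℕ × ℕ, p.1 ≠ p.2 → ∫ ω, F p ω ∂μ = 0 := by
    intro p hp
    have hint1 : Integrable (fun ω => k (Xi p.1 ω) (Xi p.2 ω)) μ := by
      refine ⟨Measurable.aestronglyMeasurable ?_, HasFiniteIntegral.of_bounded (C := C)
        (ae_of_all _ fun ω => by simpa [Real.norm_eq_abs] using hkC _ _)⟩
      exact hk_meas.comp (hpair p.1 p.2)
    have h := integral_sub hint1 (integrable_const (μ := μ) θ)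
    calc ∫ ω, F p ω ∂μ = ∫ ω, (k (Xi p.1 ω) (Xi p.2 ω) - θ) ∂μ := rfl
      _ = (∫ ω, k (Xi p.1 ω) (Xi p.2 ω) ∂μ) - ∫ _ω, θ ∂μ := h
      _ = 0 := by rw [hmean p.1 p.2 hp]; simp
  -- zero covariance for disjoint pairs
  have hcov : ∀ p q : ℕ × ℕ, p.1 ≠ p.2 → q.1 ≠ q.2 →
      p.1 ≠ q.1 → p.1 ≠ q.2 → p.2 ≠ q.1 → p.2 ≠ q.2 →
      ∫ ω, F p ω * F q ω ∂μ = 0 := by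
    intro p q hp hq h1 h2 h3 h4
    have hIndepPair : ProbabilityTheory.IndepFun
        (fun ω => (Xi p.1 ω, Xi p.2 ω)) (fun ω => (Xi q.1 ω, Xi q.2 ω)) μ :=
      h_indep.indepFun_prodMk_prodMk hXi_meas p.1 p.2 q.1 q.2 h1 h2 h3 h4
    have hφ : Measurable (fun z : X × X => k z.1 z.2 - θ) := hk_meas.sub measurable_const
    have hIndepF : ProbabilityTheory.IndepFun (F p) (F q) μ := hIndepPair.comp hφ hφ
    have hmul := ProbabilityTheory.IndepFun.integral_mul_eq_mul_integral hIndepF (hF_meas p).aestronglyMeasurable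
      (hF_meas q).aestronglyMeasurable
    have : ∫ ω, F p ω * F q ω ∂μ = ∫ ω, (F p * F q) ω ∂μ := by simp [Pi.mul_apply]
    rw [this, hmul, hF_mean p hp, hF_mean q hq, zero_mul]
  -- covariance bound
  have hcov_le : ∀ p q : ℕ × ℕ, ∫ ω, F p ω * F q ω ∂μ ≤ B ^ 2 := by
    intro p q
    calc ∫ ω, F p ω * F q ω ∂μ ≤ ∫ _, B ^ 2 ∂μ := by
          apply integral_mono (hFF_int p q) (integrable_const _)
          intro ω
          calc F p ω * F q ω ≤ |F p ω * F q ω| := le_abs_self _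
            _ = |F p ω| * |F q ω| := abs_mul _ _
            _ ≤ B * B := mul_le_mul (hF_bdd p ω) (hF_bdd q ω) (abs_nonneg _) hBnn
            _ = B ^ 2 := (sq B).symm
      _ = B ^ 2 := by simp
  -- cardinality of offDiag
  have hcard : ∀ n : ℕ, (((Finset.range n).offDiag.card : ℝ)) = (n:ℝ) * ((n:ℝ) - 1) := by
    intro n
    have h1 : (Finset.range n).offDiag.card = n * n - n := by
      rw [Finset.offDiag_card, Finset.card_range]
    have h2 : n ≤ n * n := by
      rcases Nat.eq_zero_or_pos n with h | h
      · simp [h]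
      · exact Nat.le_mul_of_pos_left n h
    rw [h1, Nat.cast_sub h2]
    push_cast; ring
  -- variance bound
  have hvar : ∀ n : ℕ,
      ∫ ω, (∑ p ∈ (Finset.range n).offDiag, F p ω) ^ 2 ∂μ ≤ 4 * B ^ 2 * (n : ℝ) ^ 3 := by
    intro n
    set D := (Finset.range n).offDiag with hD
    have hexp : ∀ ω : Ω, (∑ p ∈ D, F p ω) ^ 2 = ∑ p ∈ D, ∑ q ∈ D, F p ω * F q ω := by
      intro ω; rw [sq, Finset.sum_mul_sum]
    have hswap : ∫ ω, (∑ p ∈ D, F p ω) ^ 2 ∂μ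
        = ∑ p ∈ D, ∑ q ∈ D, ∫ ω, F p ω * F q ω ∂μ := by
      simp_rw [hexp]
      rw [integral_finset_sum _ (fun p _ => integrable_finset_sum _ (fun q _ => hFF_int p q))]
      exact Finset.sum_congr rfl fun p _ => integral_finset_sum _ (fun q _ => hFF_int p q)
    rw [hswap]
    have hinner : ∀ p ∈ D, ∑ q ∈ D, ∫ ω, F p ω * F q ω ∂μ ≤ (4 * n : ℝ) * B ^ 2 := by
      intro p hp
      have hp' : p.1 ≠ p.2 := (Finset.mem_offDiag.mp hp).2.2
      have hfilter : ∑ q ∈ D.filter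
            (fun q => q.1 = p.1 ∨ q.1 = p.2 ∨ q.2 = p.1 ∨ q.2 = p.2),
            (∫ ω, F p ω * F q ω ∂μ)
          = ∑ q ∈ D, ∫ ω, F p ω * F q ω ∂μ := by
        apply Finset.sum_filter_of_ne
        intro q hq hne
        by_contra hcon
        push_neg at hcon
        obtain ⟨c1, c2, c3, c4⟩ := hcon
        have hq' : q.1 ≠ q.2 := (Finset.mem_offDiag.mp hq).2.2
        exact hne (hcov p q hp' hq' (fun h => c1 h.symm) (fun h => c3 h.symm)
          (fun h => c2 h.symm) (fun h => c4 h.symm))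
      rw [← hfilter]
      have hsub : D.filter (fun q => q.1 = p.1 ∨ q.1 = p.2 ∨ q.2 = p.1 ∨ q.2 = p.2)
          ⊆ (({p.1, p.2} : Finset ℕ) ×ˢ Finset.range n)
            ∪ (Finset.range n ×ˢ ({p.1, p.2} : Finset ℕ)) := by
        intro q hq
        obtain ⟨hqD, hcase⟩ := Finset.mem_filter.mp hq
        rw [hD, Finset.mem_offDiag] at hqD
        obtain ⟨hq1, hq2, -⟩ := hqD
        simp only [Finset.mem_union, Finset.mem_product, Finset.mem_insert,
          Finset.mem_singleton]
        tauto
      have hcard_le : (D.filter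
          (fun q => q.1 = p.1 ∨ q.1 = p.2 ∨ q.2 = p.1 ∨ q.2 = p.2)).card ≤ 4 * n := by
        calc _ ≤ ((({p.1, p.2} : Finset ℕ) ×ˢ Finset.range n)
              ∪ (Finset.range n ×ˢ ({p.1, p.2} : Finset ℕ))).card :=
            Finset.card_le_card hsub
          _ ≤ (({p.1, p.2} : Finset ℕ) ×ˢ Finset.range n).card
              + (Finset.range n ×ˢ ({p.1, p.2} : Finset ℕ)).card := Finset.card_union_le _ _
          _ ≤ 2 * n + n * 2 := by
            rw [Finset.card_product, Finset.card_product, Finset.card_range]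
            have h2 : ({p.1, p.2} : Finset ℕ).card ≤ 2 :=
              (Finset.card_insert_le _ _).trans (by simp)
            exact add_le_add (Nat.mul_le_mul_right n h2) (Nat.mul_le_mul_left n h2)
          _ = 4 * n := by ring
      calc ∑ q ∈ D.filter _, ∫ ω, F p ω * F q ω ∂μ
          ≤ ∑ _q ∈ D.filter
              (fun q => q.1 = p.1 ∨ q.1 = p.2 ∨ q.2 = p.1 ∨ q.2 = p.2), B ^ 2 :=
            Finset.sum_le_sum fun q _ => hcov_le p q
        _ = ((D.filter (fun q => q.1 = p.1 ∨ q.1 = p.2 ∨ q.2 = p.1 ∨ q.2 = p.2)).card : ℝ)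
              * B ^ 2 := by rw [Finset.sum_const, nsmul_eq_mul]
        _ ≤ (4 * n : ℝ) * B ^ 2 := by
            apply mul_le_mul_of_nonneg_right _ (sq_nonneg B)
            exact_mod_cast hcard_le
    calc ∑ p ∈ D, ∑ q ∈ D, ∫ ω, F p ω * F q ω ∂μ
        ≤ ∑ _p ∈ D, (4 * n : ℝ) * B ^ 2 := Finset.sum_le_sum hinner
      _ = (D.card : ℝ) * ((4 * n : ℝ) * B ^ 2) := by rw [Finset.sum_const, nsmul_eq_mul]
      _ ≤ 4 * B ^ 2 * (n : ℝ) ^ 3 := by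
          rw [hD, hcard n]
          have hn : (0:ℝ) ≤ (n:ℝ) := Nat.cast_nonneg n
          nlinarith [mul_nonneg (mul_nonneg hn hn) (sq_nonneg B)]
  -- measurability of S
  have hS_meas : ∀ n, Measurable (S n) := by
    intro n
    apply Finset.measurable_sum
    intro p _
    exact hk_meas.comp (hpair p.1 p.2)
  -- increments of S
  have hSdiff : ∀ ω, ∀ n m : ℕ, n ≤ m →
      |S m ω - S n ω| ≤ C * (((m:ℝ) * ((m:ℝ)-1)) - ((n:ℝ) * ((n:ℝ)-1))) := by
    intro ω n m hnm
    have hsub : (Finset.range n).offDiag ⊆ (Finset.range m).offDiag :=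
      Finset.offDiag_mono (Finset.range_subset_range.mpr hnm)
    have hsplit : S m ω - S n ω
        = ∑ p ∈ (Finset.range m).offDiag \ (Finset.range n).offDiag,
            k (Xi p.1 ω) (Xi p.2 ω) := by
      have := Finset.sum_sdiff (f := fun p : ℕ × ℕ => k (Xi p.1 ω) (Xi p.2 ω)) hsub
      rw [hSdef]
      simp only
      linarith
    rw [hsplit]
    calc |∑ p ∈ (Finset.range m).offDiag \ (Finset.range n).offDiag,
          k (Xi p.1 ω) (Xi p.2 ω)|
        ≤ ∑ p ∈ (Finset.range m).offDiag \ (Finset.range n).offDiag,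
            |k (Xi p.1 ω) (Xi p.2 ω)| := Finset.abs_sum_le_sum_abs _ _
      _ ≤ ∑ _p ∈ (Finset.range m).offDiag \ (Finset.range n).offDiag, C :=
          Finset.sum_le_sum fun p _ => hkC _ _
      _ = (((Finset.range m).offDiag \ (Finset.range n).offDiag).card : ℝ) * C := by
          rw [Finset.sum_const, nsmul_eq_mul]
      _ = (((Finset.range m).offDiag.card : ℝ) - ((Finset.range n).offDiag.card : ℝ)) * C := by
          rw [Finset.cast_card_sdiff hsub]
      _ = C * (((m:ℝ) * ((m:ℝ)-1)) - ((n:ℝ) * ((n:ℝ)-1))) := by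
          rw [hcard, hcard]; ring
  -- uniform bound on the normalized statistic
  have hu_bdd : ∀ (n : ℕ) ω, |((n:ℝ) * ((n:ℝ)-1))⁻¹ * S n ω| ≤ C := by
    intro n ω
    rcases le_or_gt n 1 with h | h
    · interval_cases n <;> simp [hSdef, Finset.range_one, hCnn]
    · have hn2 : (2:ℝ) ≤ (n:ℝ) := by exact_mod_cast h
      have hM : (0:ℝ) < (n:ℝ) * ((n:ℝ)-1) := by nlinarith
      rw [abs_mul, abs_of_pos (inv_pos.mpr hM)]
      have hSb : |S n ω| ≤ ((n:ℝ) * ((n:ℝ)-1)) * C := by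
        calc |S n ω| ≤ ∑ p ∈ (Finset.range n).offDiag, |k (Xi p.1 ω) (Xi p.2 ω)| :=
            Finset.abs_sum_le_sum_abs _ _
          _ ≤ ∑ _p ∈ (Finset.range n).offDiag, C := Finset.sum_le_sum fun p _ => hkC _ _
          _ = (((Finset.range n).offDiag.card : ℝ)) * C := by
              rw [Finset.sum_const, nsmul_eq_mul]
          _ = ((n:ℝ) * ((n:ℝ)-1)) * C := by rw [hcard]
      calc ((n:ℝ) * ((n:ℝ)-1))⁻¹ * |S n ω|
          ≤ ((n:ℝ) * ((n:ℝ)-1))⁻¹ * (((n:ℝ) * ((n:ℝ)-1)) * C) :=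
            mul_le_mul_of_nonneg_left hSb (inv_nonneg.mpr hM.le)
        _ = C := by field_simp [show (n:ℝ) - 1 ≠ 0 by linarith]
  -- second moment bound on the normalized statistic
  have hsecond : ∀ n : ℕ, 2 ≤ n →
      ∫ ω, (((n:ℝ) * ((n:ℝ)-1))⁻¹ * S n ω - θ) ^ 2 ∂μ ≤ 64 * B ^ 2 / (n:ℝ) := by
    intro n hn
    have hn2 : (2:ℝ) ≤ (n:ℝ) := by exact_mod_cast hn
    have hM : (0:ℝ) < (n:ℝ) * ((n:ℝ)-1) := by nlinarith
    have hrepr : ∀ ω, ((n:ℝ) * ((n:ℝ)-1))⁻¹ * S n ω - θ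
        = ((n:ℝ) * ((n:ℝ)-1))⁻¹ * ∑ p ∈ (Finset.range n).offDiag, F p ω := by
      intro ω
      have hsumF : ∑ p ∈ (Finset.range n).offDiag, F p ω
          = S n ω - ((n:ℝ) * ((n:ℝ)-1)) * θ := by
        rw [hFdef]
        simp only
        rw [Finset.sum_sub_distrib, Finset.sum_const, nsmul_eq_mul, hcard]
      rw [hsumF]
      field_simp [show (n:ℝ) - 1 ≠ 0 by linarith]
    have hint : ∫ ω, (((n:ℝ) * ((n:ℝ)-1))⁻¹ * S n ω - θ) ^ 2 ∂μ
        = (((n:ℝ) * ((n:ℝ)-1))⁻¹) ^ 2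
            * ∫ ω, (∑ p ∈ (Finset.range n).offDiag, F p ω) ^ 2 ∂μ := by
      rw [← integral_const_mul]
      refine integral_congr_ae (MeasureTheory.ae_of_all _ fun ω => ?_)
      simp only [hrepr ω]
      ring
    rw [hint]
    have h1 : (((n:ℝ) * ((n:ℝ)-1))⁻¹) ^ 2
          * ∫ ω, (∑ p ∈ (Finset.range n).offDiag, F p ω) ^ 2 ∂μ
        ≤ (((n:ℝ) * ((n:ℝ)-1))⁻¹) ^ 2 * (4 * B ^ 2 * (n:ℝ) ^ 3) :=
      mul_le_mul_of_nonneg_left (hvar n) (by positivity)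
    refine h1.trans ?_
    rw [inv_pow, inv_mul_le_iff₀ (by positivity), ← mul_div_assoc,
      le_div_iff₀ (by linarith : (0:ℝ) < (n:ℝ))]
    have hq : (n:ℝ) ^ 2 ≤ 4 * ((n:ℝ)-1) ^ 2 := by nlinarith
    nlinarith [mul_le_mul_of_nonneg_left hq (by positivity : (0:ℝ) ≤ 4 * B ^ 2 * (n:ℝ) ^ 2),
      (by positivity : (0:ℝ) ≤ B ^ 2 * (n:ℝ) ^ 2 * ((n:ℝ)-1) ^ 2)]
  -- the sequence along squares
  have hnj : ∀ j : ℕ, 2 ≤ (j + 2) ^ 2 := by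
    intro j
    have : 2 ^ 2 ≤ (j + 2) ^ 2 := Nat.pow_le_pow_left (by omega) 2
    omega
  set Y : ℕ → Ω → ℝ := fun j ω =>
    ((((j+2)^2 : ℕ):ℝ) * ((((j+2)^2 : ℕ):ℝ) - 1))⁻¹ * S ((j+2)^2) ω - θ with hYdef
  have hY_meas : ∀ j, Measurable (Y j) := fun j =>
    ((hS_meas ((j+2)^2)).const_mul _).sub measurable_const
  have hY_bdd : ∀ j ω, |Y j ω| ≤ B := by
    intro j ω
    have h1 := hu_bdd ((j+2)^2) ω
    calc |Y j ω| ≤ |((((j+2)^2 : ℕ):ℝ) * ((((j+2)^2 : ℕ):ℝ) - 1))⁻¹ * S ((j+2)^2) ω| + |θ| :=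
        abs_sub _ _
      _ ≤ B := by rw [hBdef]; linarith
  have hY2_int : ∀ j, Integrable (fun ω => (Y j ω)^2) μ := fun j =>
    ⟨((hY_meas j).pow_const 2).aestronglyMeasurable,
     HasFiniteIntegral.of_bounded (C := B^2) (ae_of_all _ fun ω => by
       rw [Real.norm_eq_abs, abs_of_nonneg (sq_nonneg _)]
       calc (Y j ω)^2 = |Y j ω|^2 := (sq_abs _).symm
         _ ≤ B^2 := pow_le_pow_left₀ (abs_nonneg _) (hY_bdd j ω) 2)⟩
  have hY2_bound : ∀ j, ∫ ω, (Y j ω)^2 ∂μ ≤ 64 * B^2 * (((j:ℝ)+2)^2)⁻¹ := by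
    intro j
    have h := hsecond ((j+2)^2) (hnj j)
    have hc : ((((j+2)^2 : ℕ)):ℝ) = ((j:ℝ)+2)^2 := by push_cast; ring
    calc ∫ ω, (Y j ω)^2 ∂μ ≤ 64 * B^2 / ((((j+2)^2 : ℕ)):ℝ) := h
      _ = 64 * B^2 * (((j:ℝ)+2)^2)⁻¹ := by rw [hc, div_eq_mul_inv]
  have hsummable : Summable (fun j : ℕ => 64 * B^2 * (((j:ℝ)+2)^2)⁻¹) := by
    apply Summable.mul_left
    have h0 : Summable (fun j : ℕ => 1 / ((j:ℝ))^2) :=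
      Real.summable_one_div_nat_pow.mpr one_lt_two
    have h1 := (summable_nat_add_iff 2).mpr h0
    exact h1.congr fun j => by push_cast; rw [one_div]
  have hlint : ∀ j, ∫⁻ ω, ENNReal.ofReal ((Y j ω)^2) ∂μ
      = ENNReal.ofReal (∫ ω, (Y j ω)^2 ∂μ) := fun j =>
    (ofReal_integral_eq_lintegral_ofReal (hY2_int j) (ae_of_all _ fun ω => sq_nonneg _)).symm
  have haemeas : ∀ j, Measurable (fun ω => ENNReal.ofReal ((Y j ω)^2)) :=
    fun j => ((hY_meas j).pow_const 2).ennreal_ofReal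
  have htsum_lt : ∀ᵐ ω ∂μ, ∑' j, ENNReal.ofReal ((Y j ω)^2) < ⊤ := by
    apply ae_lt_top (Measurable.ennreal_tsum haemeas)
    rw [lintegral_tsum (fun j => (haemeas j).aemeasurable)]
    apply ne_top_of_le_ne_top
      (ENNReal.ofReal_ne_top (r := ∑' j : ℕ, 64 * B^2 * (((j:ℝ)+2)^2)⁻¹))
    calc ∑' j, ∫⁻ ω, ENNReal.ofReal ((Y j ω)^2) ∂μ
        ≤ ∑' j : ℕ, ENNReal.ofReal (64 * B^2 * (((j:ℝ)+2)^2)⁻¹) :=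
          ENNReal.tsum_le_tsum fun j => by
            rw [hlint j]; exact ENNReal.ofReal_le_ofReal (hY2_bound j)
      _ = ENNReal.ofReal (∑' j : ℕ, 64 * B^2 * (((j:ℝ)+2)^2)⁻¹) :=
          (ENNReal.ofReal_tsum_of_nonneg (fun j => by positivity) hsummable).symm
  filter_upwards [htsum_lt] with ω hω
  have h0 : Tendsto (fun j => ENNReal.ofReal ((Y j ω)^2)) atTop (nhds 0) :=
    ENNReal.tendsto_atTop_zero_of_tsum_ne_top hω.ne
  have h1 : Tendsto (fun j => (Y j ω)^2) atTop (nhds 0) := by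
    have h2 := (ENNReal.tendsto_toReal (a := 0) (by simp)).comp h0
    simp only [ENNReal.toReal_zero] at h2
    exact h2.congr fun j => by
      simp [Function.comp, ENNReal.toReal_ofReal (sq_nonneg (Y j ω))]
  have h2 : Tendsto (fun j => Y j ω) atTop (nhds 0) := by
    rw [tendsto_zero_iff_abs_tendsto_zero]
    have h3 := (Real.continuous_sqrt.tendsto 0).comp h1
    simp only [Real.sqrt_zero] at h3
    exact h3.congr fun j => by simp [Function.comp, Real.sqrt_sq_eq_abs]
  have hsq : Tendsto (fun j : ℕ => (((j^2 : ℕ):ℝ) * (((j^2 : ℕ):ℝ) - 1))⁻¹ * S (j^2) ω)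
      atTop (nhds θ) := by
    apply (tendsto_add_atTop_iff_nat 2).mp
    have h4 := h2.add_const θ
    rw [zero_add] at h4
    refine h4.congr fun j => ?_
    simp only [hYdef]
    ring
  exact ustat_interp hCnn (fun n => S n ω) (by simp [hSdef])
    (fun n m hnm => hSdiff ω n m hnm) hsq
end

section
/- Let T > 0, d ∈ ℕ, and let x, y : [0, T] → ℝ^d be continuously differentiable paths with derivatives x' and y'. Then there exists a unique continuous function f : [0, T] × [0, T] → ℝ satisfying the Goursat-type integral equation f(s, t) = 1 + ∫_0^s ∫_0^t f(u, v) ⟨x'(u), y'(v)⟩ du dv for all (s, t) ∈ [0, T] × [0, T], where ⟨·,·⟩ denotes the Euclidean inner product on ℝ^d. -/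
/-! The solutions are the fixed points of the Picard map
`f ↦ 1 + ∫₀ˢ ∫₀ᵗ f κ`. Its `n`-th iterate moves two functions apart by at most
`(‖κ‖ T²)ⁿ / n!` times their distance, so some iterate is a contraction and the Banach fixed
point theorem gives existence and uniqueness. -/

open MeasureTheory
open Set Function Nat
open scoped BoundedContinuousFunction

theorem exists_unique_isFixedPt_of_dist_iterate_le {X : Type*} [MetricSpace X] [CompleteSpace X]
    [Nonempty X] {Φ : X → X} {C : ℝ}
    (h : ∀ (n : ℕ) (x y : X), dist (Φ^[n] x) (Φ^[n] y) ≤ C ^ n / n ! * dist x y) :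
    ∃! x, IsFixedPt Φ x := by
  obtain ⟨n, hn⟩ :=
    ((FloorSemiring.tendsto_pow_div_factorial_atTop C).eventually (gt_mem_nhds one_pos)).exists
  have hcontr : ContractingWith (C ^ n / n !).toNNReal (Φ^[n]) :=
    ⟨Real.toNNReal_lt_one.mpr hn, LipschitzWith.of_dist_le_mul fun x y =>
      (h n x y).trans (mul_le_mul_of_nonneg_right (Real.le_coe_toNNReal _) dist_nonneg)⟩
  exact ⟨_, hcontr.isFixedPt_fixedPoint_iterate, fun y hy =>
    hcontr.fixedPoint_unique (hy.iterate n)⟩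

noncomputable def rectIntegral (F : ℝ × ℝ → ℝ) (p : ℝ × ℝ) : ℝ :=
  ∫ u in (0 : ℝ)..p.1, ∫ v in (0 : ℝ)..p.2, F (u, v)

section rectIntegral

variable {F G : ℝ × ℝ → ℝ}

theorem continuous_rectIntegral (hF : Continuous F) : Continuous (rectIntegral F) := by
  have hinner : Continuous fun q : ℝ × ℝ => ∫ v in (0 : ℝ)..q.2, F (q.1, v) :=
    intervalIntegral.continuous_parametric_primitive_of_continuous
      (f := fun u v => F (u, v)) hF
  have houter : Continuous fun q : ℝ × ℝ => ∫ u in (0 : ℝ)..q.2, ∫ v in (0 : ℝ)..q.1, F (u, v) :=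
    intervalIntegral.continuous_parametric_primitive_of_continuous
      (f := fun b u => ∫ v in (0 : ℝ)..b, F (u, v)) (hinner.comp continuous_swap)
  exact houter.comp continuous_swap

theorem rectIntegral_sub (hF : Continuous F) (hG : Continuous G) (p : ℝ × ℝ) :
    rectIntegral (fun q => F q - G q) p = rectIntegral F p - rectIntegral G p := by
  have hslice : ∀ {H : ℝ × ℝ → ℝ}, Continuous H →
      Continuous fun u => ∫ v in (0 : ℝ)..p.2, H (u, v) := fun {H} hH =>
    (intervalIntegral.continuous_parametric_primitive_of_continuous (f := fun u v => H (u, v))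
      hH).comp (continuous_id.prodMk continuous_const)
  rw [rectIntegral, rectIntegral, rectIntegral, ← intervalIntegral.integral_sub
    ((hslice hF).intervalIntegrable _ _) ((hslice hG).intervalIntegrable _ _)]
  refine intervalIntegral.integral_congr fun u _ => intervalIntegral.integral_sub ?_ ?_
  · exact (hF.comp (Continuous.prodMk_right u)).intervalIntegrable _ _
  · exact (hG.comp (Continuous.prodMk_right u)).intervalIntegrable _ _

theorem abs_rectIntegral_le {a b C : ℝ} {n : ℕ} (ha : 0 ≤ a) (hb : 0 ≤ b)
    (h : ∀ u ∈ Icc 0 a, ∀ v ∈ Icc 0 b, |F (u, v)| ≤ C * u ^ n) :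
    |rectIntegral F (a, b)| ≤ C * b * a ^ (n + 1) / (n + 1) := by
  have hinner : ∀ u ∈ Ioc 0 a, ‖∫ v in (0 : ℝ)..b, F (u, v)‖ ≤ C * b * u ^ n := by
    intro u hu
    refine (intervalIntegral.norm_integral_le_of_norm_le_const (C := C * u ^ n)
      fun v hv => ?_).trans_eq ?_
    · rw [uIoc_of_le hb] at hv
      exact h u (Ioc_subset_Icc_self hu) v (Ioc_subset_Icc_self hv)
    · rw [sub_zero, abs_of_nonneg hb]; ring
  calc |rectIntegral F (a, b)|
      ≤ ∫ u in (0 : ℝ)..a, C * b * u ^ n :=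
        intervalIntegral.norm_integral_le_of_norm_le ha (Filter.Eventually.of_forall hinner)
          ((continuous_const.mul (continuous_pow n)).intervalIntegrable _ _)
    _ = C * b * a ^ (n + 1) / (n + 1) := by
        rw [intervalIntegral.integral_const_mul, integral_pow]; ring

theorem rectIntegral_congr {a b : ℝ} (ha : 0 ≤ a) (hb : 0 ≤ b)
    (h : EqOn F G (Icc 0 a ×ˢ Icc 0 b)) : rectIntegral F (a, b) = rectIntegral G (a, b) := by
  refine intervalIntegral.integral_congr fun u hu => intervalIntegral.integral_congr fun v hv => ?_
  rw [uIcc_of_le ha] at hu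
  rw [uIcc_of_le hb] at hv
  exact h ⟨hu, hv⟩

end rectIntegral

/-- Functions on the square `[0, T]²` are extended to `ℝ²` by clamping to the square, so that the
Picard map acts on the complete space `ℝ × ℝ →ᵇ ℝ`. -/
noncomputable def clampSq {T : ℝ} (hT : 0 ≤ T) (p : ℝ × ℝ) : ℝ × ℝ :=
  (projIcc 0 T hT p.1, projIcc 0 T hT p.2)

section clampSq

variable {T : ℝ} (hT : 0 ≤ T)

theorem continuous_clampSq : Continuous (clampSq hT) := by
  unfold clampSq; fun_prop

theorem clampSq_mem (p : ℝ × ℝ) : clampSq hT p ∈ Icc 0 T ×ˢ Icc 0 T :=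
  ⟨(projIcc 0 T hT p.1).2, (projIcc 0 T hT p.2).2⟩

theorem clampSq_of_mem {p : ℝ × ℝ} (hp : p ∈ Icc 0 T ×ˢ Icc 0 T) : clampSq hT p = p := by
  simp [clampSq, projIcc_of_mem hT hp.1, projIcc_of_mem hT hp.2]

theorem clampSq_clampSq (p : ℝ × ℝ) : clampSq hT (clampSq hT p) = clampSq hT p :=
  clampSq_of_mem hT (clampSq_mem hT p)

noncomputable def extendSq (h : ℝ × ℝ → ℝ) (hh : ContinuousOn h (Icc 0 T ×ˢ Icc 0 T)) :
    ℝ × ℝ →ᵇ ℝ where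
  toFun := h ∘ clampSq hT
  continuous_toFun := hh.comp_continuous (continuous_clampSq hT) (clampSq_mem hT)
  map_bounded' := Metric.isBounded_range_iff.mp <|
    ((isCompact_Icc.prod isCompact_Icc).image_of_continuousOn hh).isBounded.subset <|
      range_subset_iff.mpr fun p => mem_image_of_mem h (clampSq_mem hT p)

@[simp]
theorem extendSq_apply (h : ℝ × ℝ → ℝ) (hh : ContinuousOn h (Icc 0 T ×ˢ Icc 0 T)) (p : ℝ × ℝ) :
    extendSq hT h hh p = h (clampSq hT p) :=
  rfl

end clampSq

section goursatMap

variable {T : ℝ} (hT : 0 ≤ T) {κ : ℝ × ℝ → ℝ} (hκ : ContinuousOn κ (Icc 0 T ×ˢ Icc 0 T))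

noncomputable def goursatMap (f : ℝ × ℝ →ᵇ ℝ) : ℝ × ℝ →ᵇ ℝ :=
  extendSq hT (fun p => 1 + rectIntegral (fun q => f q * extendSq hT κ hκ q) p)
    (continuous_const.add
      (continuous_rectIntegral (f.continuous.mul (extendSq hT κ hκ).continuous))).continuousOn

theorem goursatMap_apply (f : ℝ × ℝ →ᵇ ℝ) (p : ℝ × ℝ) :
    goursatMap hT hκ f p =
      1 + rectIntegral (fun q => f q * extendSq hT κ hκ q) (clampSq hT p) :=
  rfl

theorem abs_goursatMap_sub_le {f g : ℝ × ℝ →ᵇ ℝ} {C : ℝ} (hC : 0 ≤ C) {n : ℕ}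
    (h : ∀ p, |f p - g p| ≤ C * (clampSq hT p).1 ^ n) (p : ℝ × ℝ) :
    |goursatMap hT hκ f p - goursatMap hT hκ g p|
      ≤ C * ‖extendSq hT κ hκ‖ * T * (clampSq hT p).1 ^ (n + 1) / (n + 1) := by
  rw [goursatMap_apply, goursatMap_apply, add_sub_add_left_eq_sub]
  set k := extendSq hT κ hκ
  rw [← rectIntegral_sub (F := fun q => f q * k q) (G := fun q => g q * k q)
    (f.continuous.mul k.continuous) (g.continuous.mul k.continuous)]
  obtain ⟨⟨ha, haT⟩, ⟨hb, hbT⟩⟩ := clampSq_mem hT p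
  have hdiff : ∀ u ∈ Icc 0 (clampSq hT p).1, ∀ v ∈ Icc 0 (clampSq hT p).2,
      |f (u, v) * k (u, v) - g (u, v) * k (u, v)| ≤ C * ‖k‖ * u ^ n := by
    intro u hu v hv
    have huv : clampSq hT (u, v) = (u, v) :=
      clampSq_of_mem hT ⟨⟨hu.1, hu.2.trans haT⟩, ⟨hv.1, hv.2.trans hbT⟩⟩
    rw [← sub_mul, abs_mul, mul_right_comm]
    have := h (u, v)
    rw [huv] at this
    exact mul_le_mul this (k.norm_coe_le_norm _) (abs_nonneg _)
      (mul_nonneg hC (pow_nonneg hu.1 n))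
  refine (abs_rectIntegral_le ha hb hdiff).trans ?_
  gcongr

theorem abs_goursatMap_iterate_sub_le (f g : ℝ × ℝ →ᵇ ℝ) (n : ℕ) (p : ℝ × ℝ) :
    |(goursatMap hT hκ)^[n] f p - (goursatMap hT hκ)^[n] g p|
      ≤ dist f g * (‖extendSq hT κ hκ‖ * T) ^ n / n ! * (clampSq hT p).1 ^ n := by
  induction n generalizing p with
  | zero =>
    simpa [Real.dist_eq] using BoundedContinuousFunction.dist_coe_le_dist (f := f) (g := g) p
  | succ n ih =>
    rw [iterate_succ_apply', iterate_succ_apply']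
    refine (abs_goursatMap_sub_le hT hκ (by positivity) ih p).trans_eq ?_
    push_cast [factorial_succ]
    field_simp
    ring

theorem dist_goursatMap_iterate_le (n : ℕ) (f g : ℝ × ℝ →ᵇ ℝ) :
    dist ((goursatMap hT hκ)^[n] f) ((goursatMap hT hκ)^[n] g)
      ≤ (‖extendSq hT κ hκ‖ * T * T) ^ n / n ! * dist f g := by
  refine (BoundedContinuousFunction.dist_le (by positivity)).mpr fun p => ?_
  refine (abs_goursatMap_iterate_sub_le hT hκ f g n p).trans ?_
  obtain ⟨⟨ha, haT⟩, -⟩ := clampSq_mem hT p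
  calc dist f g * (‖extendSq hT κ hκ‖ * T) ^ n / n ! * (clampSq hT p).1 ^ n
      ≤ dist f g * (‖extendSq hT κ hκ‖ * T) ^ n / n ! * T ^ n := by gcongr
    _ = (‖extendSq hT κ hκ‖ * T * T) ^ n / n ! * dist f g := by ring

end goursatMap

def IsGoursatSolution (T : ℝ) (κ f : ℝ × ℝ → ℝ) : Prop :=
  ∀ s ∈ Icc 0 T, ∀ t ∈ Icc 0 T, f (s, t) = 1 + rectIntegral (fun q => f q * κ q) (s, t)

section goursatSolution

variable {T : ℝ} (hT : 0 ≤ T) {κ : ℝ × ℝ → ℝ} (hκ : ContinuousOn κ (Icc 0 T ×ˢ Icc 0 T))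

theorem isFixedPt_goursatMap_extendSq_iff {g : ℝ × ℝ → ℝ}
    (hg : ContinuousOn g (Icc 0 T ×ˢ Icc 0 T)) :
    IsFixedPt (goursatMap hT hκ) (extendSq hT g hg) ↔ IsGoursatSolution T κ g := by
  have hrect : ∀ q ∈ Icc 0 T ×ˢ Icc 0 T,
      rectIntegral (fun r => extendSq hT g hg r * extendSq hT κ hκ r) q
        = rectIntegral (fun r => g r * κ r) q := by
    rintro ⟨s, t⟩ ⟨⟨hs, hsT⟩, ⟨ht, htT⟩⟩
    refine rectIntegral_congr hs ht fun r ⟨⟨hu, huT⟩, ⟨hv, hvT⟩⟩ => ?_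
    have hr : r ∈ Icc 0 T ×ˢ Icc 0 T := ⟨⟨hu, huT.trans hsT⟩, ⟨hv, hvT.trans htT⟩⟩
    simp only [extendSq_apply, clampSq_of_mem hT hr]
  constructor
  · intro hfix s hs t ht
    have := DFunLike.congr_fun hfix (s, t)
    rwa [goursatMap_apply, extendSq_apply, clampSq_of_mem hT ⟨hs, ht⟩, hrect _ ⟨hs, ht⟩,
      eq_comm] at this
  · intro hsol
    ext p
    obtain ⟨hs, ht⟩ := clampSq_mem hT p
    rw [goursatMap_apply, extendSq_apply, hrect _ ⟨hs, ht⟩]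
    exact (hsol _ hs _ ht).symm

theorem extendSq_eq_self_of_isFixedPt {f : ℝ × ℝ →ᵇ ℝ} (hf : IsFixedPt (goursatMap hT hκ) f) :
    extendSq hT f f.continuous.continuousOn = f := by
  ext p
  rw [extendSq_apply, ← hf]
  simp only [goursatMap_apply, clampSq_clampSq]

end goursatSolution

theorem exists_unique_isGoursatSolution {T : ℝ} (hT : 0 ≤ T) {κ : ℝ × ℝ → ℝ}
    (hκ : ContinuousOn κ (Icc 0 T ×ˢ Icc 0 T)) :
    ∃ f : ℝ × ℝ → ℝ, (ContinuousOn f (Icc 0 T ×ˢ Icc 0 T) ∧ IsGoursatSolution T κ f) ∧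
      ∀ g : ℝ × ℝ → ℝ, (ContinuousOn g (Icc 0 T ×ˢ Icc 0 T) ∧ IsGoursatSolution T κ g) →
        EqOn g f (Icc 0 T ×ˢ Icc 0 T) := by
  obtain ⟨f, hfix, hunique⟩ :=
    exists_unique_isFixedPt_of_dist_iterate_le (dist_goursatMap_iterate_le hT hκ)
  refine ⟨f, ⟨f.continuous.continuousOn, ?_⟩, fun g ⟨hg, hsol⟩ p hp => ?_⟩
  · rw [← isFixedPt_goursatMap_extendSq_iff hT hκ f.continuous.continuousOn,
      extendSq_eq_self_of_isFixedPt hT hκ hfix]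
    exact hfix
  · have hgf := hunique _ ((isFixedPt_goursatMap_extendSq_iff hT hκ hg).mpr hsol)
    rw [← hgf, extendSq_apply, clampSq_of_mem hT hp]

theorem goursat_signature_kernel_pde_existence_uniqueness_general
    (T : ℝ) (hT : 0 < T) (d : ℕ)
    (dx dy : ℝ → EuclideanSpace ℝ (Fin d))
    (hdx : ContinuousOn dx (Set.Icc (0 : ℝ) T))
    (hdy : ContinuousOn dy (Set.Icc (0 : ℝ) T)) :
    ∃ f : ℝ × ℝ → ℝ,
      (ContinuousOn f (Set.Icc (0 : ℝ) T ×ˢ Set.Icc (0 : ℝ) T) ∧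
        ∀ s ∈ Set.Icc (0 : ℝ) T, ∀ t ∈ Set.Icc (0 : ℝ) T,
          f (s, t) = 1 + ∫ u in (0 : ℝ)..s, (∫ v in (0 : ℝ)..t,
            f (u, v) * (inner ℝ (dx u) (dy v) : ℝ))) ∧
      ∀ g : ℝ × ℝ → ℝ,
        (ContinuousOn g (Set.Icc (0 : ℝ) T ×ˢ Set.Icc (0 : ℝ) T) ∧
          ∀ s ∈ Set.Icc (0 : ℝ) T, ∀ t ∈ Set.Icc (0 : ℝ) T,
            g (s, t) = 1 + ∫ u in (0 : ℝ)..s, (∫ v in (0 : ℝ)..t,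
              g (u, v) * (inner ℝ (dx u) (dy v) : ℝ))) →
        Set.EqOn g f (Set.Icc (0 : ℝ) T ×ˢ Set.Icc (0 : ℝ) T) :=
  exists_unique_isGoursatSolution hT.le
    ((hdx.comp continuousOn_fst fun _ hp => hp.1).inner
      (hdy.comp continuousOn_snd fun _ hp => hp.2))

theorem goursat_signature_kernel_pde_existence_uniqueness
    (T : ℝ) (hT : 0 < T) (d : ℕ)
    (x y : ℝ → EuclideanSpace ℝ (Fin d))
    (dx dy : ℝ → EuclideanSpace ℝ (Fin d))
    (hx : ∀ t ∈ Set.Icc (0 : ℝ) T, HasDerivWithinAt x (dx t) (Set.Icc (0 : ℝ) T) t)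
    (hy : ∀ t ∈ Set.Icc (0 : ℝ) T, HasDerivWithinAt y (dy t) (Set.Icc (0 : ℝ) T) t)
    (hdx : ContinuousOn dx (Set.Icc (0 : ℝ) T))
    (hdy : ContinuousOn dy (Set.Icc (0 : ℝ) T)) :
    ∃ f : ℝ × ℝ → ℝ,
      (ContinuousOn f (Set.Icc (0 : ℝ) T ×ˢ Set.Icc (0 : ℝ) T) ∧
        ∀ s ∈ Set.Icc (0 : ℝ) T, ∀ t ∈ Set.Icc (0 : ℝ) T,
          f (s, t) = 1 + ∫ u in (0 : ℝ)..s, (∫ v in (0 : ℝ)..t,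
            f (u, v) * (inner ℝ (dx u) (dy v) : ℝ))) ∧
      ∀ g : ℝ × ℝ → ℝ,
        (ContinuousOn g (Set.Icc (0 : ℝ) T ×ˢ Set.Icc (0 : ℝ) T) ∧
          ∀ s ∈ Set.Icc (0 : ℝ) T, ∀ t ∈ Set.Icc (0 : ℝ) T,
            g (s, t) = 1 + ∫ u in (0 : ℝ)..s, (∫ v in (0 : ℝ)..t,
              g (u, v) * (inner ℝ (dx u) (dy v) : ℝ))) →
        Set.EqOn g f (Set.Icc (0 : ℝ) T ×ˢ Set.Icc (0 : ℝ) T) :=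
  goursat_signature_kernel_pde_existence_uniqueness_general T hT d dx dy hdx hdy
end
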